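/- Let the sequences {w^k}, {y^k}, {z^k}, {x^k} be generated by Algorithm 2 and define u^k := x^{k+1} − σ z^{k+1} for k ≥ 0. Then for every k ≥ 0 one has u^{k+1} = (1 − ρ)u^k + ρ·Γ(u^k), where Γ(u) = u − P_σ(u) + Π_K(2P_σ(u) − u − σ(Q(P_σ(u)) + c)). -/

import Mathlib

open scoped RealInnerProductSpace

/-- The Fenchel conjugate `θ*(ξ) = sup_z {⟪ξ, z⟫ − θ(z)}`. -/
noncomputable def fenchelConj {E : Type*} [NormedAddCommGroup E] [InnerProductSpace ℝ E]
    (θ : E → EReal) (ξ : E) : EReal :=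
  ⨆ z : E, ((⟪ξ, z⟫ : ℝ) : EReal) - θ z

private lemma aux_nonpos {a C : ℝ} (h : ∀ t : ℝ, 0 < t → t < 1 → a ≤ t * C) : a ≤ 0 := by
  by_contra hc
  push_neg at hc
  rcases le_or_gt C 0 with hC | hC
  · have h1 := h (1/2) (by norm_num) (by norm_num)
    nlinarith
  · have ht0 : 0 < min (1/2) (a/(2*C)) := lt_min (by norm_num) (by positivity)
    have ht1 : min (1/2) (a/(2*C)) < 1 := lt_of_le_of_lt (min_le_left _ _) (by norm_num)
    have h1 := h _ ht0 ht1
    have h2 : min (1/2) (a/(2*C)) * C ≤ (a/(2*C)) * C :=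
      mul_le_mul_of_nonneg_right (min_le_right _ _) hC.le
    have h3 : (a/(2*C)) * C = a/2 := by field_simp
    linarith

private lemma expand_sq {E : Type*} [NormedAddCommGroup E] [InnerProductSpace ℝ E]
    (a d : E) (t : ℝ) :
    ‖a + t • d‖ ^ 2 = ‖a‖ ^ 2 + 2 * (t * ⟪a, d⟫) + t ^ 2 * ‖d‖ ^ 2 := by
  rw [norm_add_sq_real, real_inner_smul_right, norm_smul]
  simp [mul_pow, sq_abs]

private lemma prox_step {E : Type*} [NormedAddCommGroup E] [InnerProductSpace ℝ E]
    (θ : E → EReal) (hbot : ∀ v : E, θ v ≠ ⊥)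
    (hconv : ∀ z w : E, ∀ t : ℝ, 0 < t → t < 1 →
      θ (t • z + (1 - t) • w) ≤ (t : EReal) * θ z + ((1 - t : ℝ) : EReal) * θ w)
    (σ : ℝ) (hσ : 0 < σ) (P : E → E)
    (hP : ∀ u₀ ξ : E,
      fenchelConj θ (P u₀) + ((1 / (2 * σ) * ‖P u₀ - u₀‖ ^ 2 : ℝ) : EReal) ≤
        fenchelConj θ ξ + ((1 / (2 * σ) * ‖ξ - u₀‖ ^ 2 : ℝ) : EReal))
    (xk xk1 zk1 r z₀ : E) (hz0 : θ (-z₀) ≠ ⊤)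
    (hmin : ∀ z' : E, θ (-zk1) + ((⟪zk1, xk⟫ + σ / 2 * ‖r + zk1‖ ^ 2 : ℝ) : EReal) ≤
        θ (-z') + ((⟪z', xk⟫ + σ / 2 * ‖r + z'‖ ^ 2 : ℝ) : EReal))
    (hx1 : xk1 = xk + σ • (r + zk1)) :
    P (xk1 - σ • zk1) = xk1 := by
  -- θ(-zk1) is finite
  have hfin : θ (-zk1) ≠ ⊤ := by
    intro htop
    have h := hmin z₀
    rw [htop] at h
    have hl : (⊤ : EReal) + ((⟪zk1, xk⟫ + σ / 2 * ‖r + zk1‖ ^ 2 : ℝ) : EReal) = ⊤ :=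
      EReal.top_add_coe _
    rw [hl] at h
    have h2 : θ (-z₀) = ((θ (-z₀)).toReal : EReal) := (EReal.coe_toReal hz0 (hbot _)).symm
    rw [h2, ← EReal.coe_add] at h
    exact absurd (top_le_iff.mp h) (EReal.coe_ne_top _)
  set β := (θ (-zk1)).toReal with hβdef
  have hβ : θ (-zk1) = (β : EReal) := (EReal.coe_toReal hfin (hbot _)).symm
  -- the key subgradient inequality
  have key : ∀ v : E, ∀ γ : ℝ, θ v = (γ : EReal) → β + ⟪xk1, v + zk1⟫ ≤ γ := by
    intro v γ hγ
    have main : ∀ t : ℝ, 0 < t → t < 1 →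
        β + (⟪zk1, xk⟫ + σ / 2 * ‖r + zk1‖ ^ 2) ≤
        (t * γ + (1 - t) * β) + (⟪zk1 + t • (-v - zk1), xk⟫ +
          σ / 2 * ‖r + (zk1 + t • (-v - zk1))‖ ^ 2) := by
      intro t ht0 ht1
      have hneg : t • v + (1 - t) • (-zk1) = -(zk1 + t • (-v - zk1)) := by module
      have hc := hconv v (-zk1) t ht0 ht1
      rw [hneg, hγ, hβ, ← EReal.coe_mul, ← EReal.coe_mul, ← EReal.coe_add] at hc
      have h1 := hmin (zk1 + t • (-v - zk1))
      have h2 := le_trans h1 (add_le_add hc le_rfl)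
      rw [hβ, ← EReal.coe_add, ← EReal.coe_add] at h2
      exact_mod_cast h2
    have hkey0 : β - γ - ⟪-v - zk1, xk⟫ - σ * ⟪r + zk1, -v - zk1⟫ ≤ 0 := by
      apply aux_nonpos (C := σ / 2 * ‖-v - zk1‖ ^ 2)
      intro t ht0 ht1
      have h := main t ht0 ht1
      rw [inner_add_left, real_inner_smul_left, show r + (zk1 + t • (-v - zk1)) =
        (r + zk1) + t • (-v - zk1) by abel, expand_sq] at h
      have h4 : 0 ≤ t * ((γ - β) + ⟪-v - zk1, xk⟫ + σ * ⟪r + zk1, -v - zk1⟫ +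
          t * (σ / 2 * ‖-v - zk1‖ ^ 2)) := by nlinarith [h]
      have h5 : 0 ≤ (γ - β) + ⟪-v - zk1, xk⟫ + σ * ⟪r + zk1, -v - zk1⟫ +
          t * (σ / 2 * ‖-v - zk1‖ ^ 2) := by
        by_contra hX
        push_neg at hX
        nlinarith [mul_pos ht0 (neg_pos.mpr hX)]
      linarith
    -- rewrite inner products in terms of xk1
    have e0 : (-v - zk1 : E) = -(v + zk1) := by abel
    have e1 : ⟪-v - zk1, xk⟫ = -⟪xk, v + zk1⟫ := by
      rw [e0, inner_neg_left, real_inner_comm]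
    have e2 : ⟪r + zk1, -v - zk1⟫ = -⟪r + zk1, v + zk1⟫ := by
      rw [e0, inner_neg_right]
    have e3 : ⟪xk1, v + zk1⟫ = ⟪xk, v + zk1⟫ + σ * ⟪r + zk1, v + zk1⟫ := by
      rw [hx1, inner_add_left, real_inner_smul_left]
    have e2' : σ * ⟪r + zk1, -v - zk1⟫ = -(σ * ⟪r + zk1, v + zk1⟫) := by rw [e2]; ring
    linarith [hkey0, e1, e2', e3]
  -- the Fenchel conjugate lower bound and value at xk1
  have hFlb : ∀ ξ : E, ((⟪ξ, -zk1⟫ - β : ℝ) : EReal) ≤ fenchelConj θ ξ := by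
    intro ξ
    have h : ((⟪ξ, -zk1⟫ : ℝ) : EReal) - θ (-zk1) = ((⟪ξ, -zk1⟫ - β : ℝ) : EReal) := by
      rw [hβ, ← EReal.coe_sub]
    rw [← h]
    exact le_iSup (fun v => ((⟪ξ, v⟫ : ℝ) : EReal) - θ v) (-zk1)
  have hFx : fenchelConj θ xk1 = ((⟪xk1, -zk1⟫ - β : ℝ) : EReal) := by
    refine le_antisymm ?_ (hFlb xk1)
    refine iSup_le fun v => ?_
    by_cases hv : θ v = ⊤
    · rw [hv]
      simp
    · have hγ : θ v = (((θ v).toReal : ℝ) : EReal) := (EReal.coe_toReal hv (hbot v)).symm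
      rw [hγ, ← EReal.coe_sub]
      have hk := key v ((θ v).toReal) hγ
      have hinner : ⟪xk1, v + zk1⟫ = ⟪xk1, v⟫ - ⟪xk1, -zk1⟫ := by
        rw [inner_add_right, inner_neg_right]; ring
      have : ⟪xk1, v⟫ - (θ v).toReal ≤ ⟪xk1, -zk1⟫ - β := by linarith
      exact_mod_cast this
  -- now compare with P
  set u₀ := xk1 - σ • zk1 with hu₀
  have hPle := hP u₀ xk1
  rw [hFx, ← EReal.coe_add] at hPle
  have hPtop : fenchelConj θ (P u₀) ≠ ⊤ := by
    intro h
    rw [h, EReal.top_add_coe] at hPle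
    exact absurd (top_le_iff.mp hPle) (EReal.coe_ne_top _)
  have hPbot : fenchelConj θ (P u₀) ≠ ⊥ := by
    intro h
    have hb := hFlb (P u₀)
    rw [h] at hb
    exact absurd (le_bot_iff.mp hb) (EReal.coe_ne_bot _)
  set π := (fenchelConj θ (P u₀)).toReal with hπdef
  have hπ : fenchelConj θ (P u₀) = (π : EReal) := (EReal.coe_toReal hPtop hPbot).symm
  rw [hπ, ← EReal.coe_add] at hPle
  have hPle' : π + 1 / (2 * σ) * ‖P u₀ - u₀‖ ^ 2 ≤
      (⟪xk1, -zk1⟫ - β) + 1 / (2 * σ) * ‖xk1 - u₀‖ ^ 2 := by exact_mod_cast hPle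
  have hlb : ⟪P u₀, -zk1⟫ - β ≤ π := by
    have hb := hFlb (P u₀)
    rw [hπ] at hb
    exact_mod_cast hb
  have e1 : xk1 - u₀ = σ • zk1 := by rw [hu₀]; abel
  have e2 : P u₀ - u₀ = (P u₀ - xk1) + σ • zk1 := by rw [hu₀]; abel
  have n1 : ‖xk1 - u₀‖ ^ 2 = σ ^ 2 * ‖zk1‖ ^ 2 := by
    rw [e1, norm_smul]; simp [mul_pow, sq_abs]
  have n2 : ‖P u₀ - u₀‖ ^ 2 = ‖P u₀ - xk1‖ ^ 2 + 2 * (σ * ⟪P u₀ - xk1, zk1⟫) +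
      σ ^ 2 * ‖zk1‖ ^ 2 := by
    rw [e2, expand_sq]
  have i1 : ⟪P u₀, -zk1⟫ = ⟪xk1, -zk1⟫ - ⟪P u₀ - xk1, zk1⟫ := by
    rw [inner_neg_right, inner_neg_right, inner_sub_left]; ring
  have hd : 1 / (2 * σ) * (‖P u₀ - xk1‖ ^ 2 + 2 * (σ * ⟪P u₀ - xk1, zk1⟫) + σ ^ 2 * ‖zk1‖ ^ 2)
      = 1 / (2 * σ) * ‖P u₀ - xk1‖ ^ 2 + (2 * σ * (1 / (2 * σ))) * ⟪P u₀ - xk1, zk1⟫ +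
        1 / (2 * σ) * (σ ^ 2 * ‖zk1‖ ^ 2) := by ring
  have hone : 2 * σ * (1 / (2 * σ)) = 1 := by field_simp
  have hsq : 1 / (2 * σ) * ‖P u₀ - xk1‖ ^ 2 ≤ 0 := by
    rw [n1, n2, hd, hone] at hPle'
    linarith
  have hzero : ‖P u₀ - xk1‖ ^ 2 = 0 := by
    have hpos : 0 < 1 / (2 * σ) := by positivity
    nlinarith [sq_nonneg ‖P u₀ - xk1‖]
  have : P u₀ - xk1 = 0 := by
    have := pow_eq_zero_iff (n := 2) (by norm_num) |>.mp hzero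
    exact norm_eq_zero.mp this
  rw [hu₀] at this ⊢
  exact sub_eq_zero.mp this

/-- Let `{wᵏ}, {yᵏ}, {zᵏ}, {xᵏ}` be generated by the generalized modified
ADMM (Algorithm 2) and define `uᵏ := xᵏ⁺¹ − σ zᵏ⁺¹`.  Then for every `k ≥ 0` one has
`uᵏ⁺¹ = (1 − ρ) uᵏ + ρ Γ(uᵏ)`, where
`Γ(u) = u − P_σ(u) + Π_K (2 P_σ(u) − u − σ (Q (P_σ u) + c))`,
`P_σ(u)` is the unique minimizer of `ξ ↦ θ*(ξ) + (1/(2σ)) ‖ξ − u‖²` and `Π_K` is the metric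
projection onto `K = {x : A x = b}`. -/
theorem generalized_modified_ADMM_is_three_operator_splitting
    {E F : Type*} [NormedAddCommGroup E] [InnerProductSpace ℝ E] [FiniteDimensional ℝ E]
    [NormedAddCommGroup F] [InnerProductSpace ℝ F] [FiniteDimensional ℝ F]
    (A : E →ₗ[ℝ] F) (hA : Function.Surjective A)
    (θ : E → EReal)
    (hproper_top : ∃ z : E, θ z ≠ ⊤) (hproper_bot : ∀ z : E, θ z ≠ ⊥)
    (hlsc : LowerSemicontinuous θ)
    (hconv : ∀ z w : E, ∀ t : ℝ, 0 < t → t < 1 →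
      θ (t • z + (1 - t) • w) ≤ (t : EReal) * θ z + ((1 - t : ℝ) : EReal) * θ w)
    (Q : E →ₗ[ℝ] E) (hQsa : ∀ a b' : E, ⟪Q a, b'⟫ = ⟪a, Q b'⟫)
    (hQpsd : ∀ a : E, 0 ≤ ⟪a, Q a⟫)
    (c : E) (b : F) (σ ρ : ℝ) (hσ : 0 < σ) (hρ0 : 0 < ρ) (hρ2 : ρ < 2)
    -- `P` is the map `P_σ`: the minimizer of `ξ ↦ θ*(ξ) + (1/(2σ)) ‖ξ − u‖²`
    (P : E → E)
    (hP : ∀ u₀ ξ : E,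
      fenchelConj θ (P u₀) + ((1 / (2 * σ) * ‖P u₀ - u₀‖ ^ 2 : ℝ) : EReal) ≤
        fenchelConj θ ξ + ((1 / (2 * σ) * ‖ξ - u₀‖ ^ 2 : ℝ) : EReal))
    -- `PiK` is the metric projection onto `K = {x : A x = b}`
    (PiK : E → E)
    (hPiK : ∀ ξ : E, A (PiK ξ) = b ∧ ∀ q : E, A q = b → ‖ξ - PiK ξ‖ ≤ ‖ξ - q‖)
    -- the iterates of Algorithm 2
    (w x z : ℕ → E) (y : ℕ → F)
    (hz0 : θ (-(z 0)) ≠ ⊤)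
    (hw : ∀ k, w (k + 1) = x k)
    (hy : ∀ k, ∀ y' : F,
      -⟪b, y (k + 1)⟫ + ⟪(LinearMap.adjoint A) (y (k + 1)) + z k - Q (w (k + 1)) - c, x k⟫ +
          σ / 2 * ‖(LinearMap.adjoint A) (y (k + 1)) + z k - Q (w (k + 1)) - c‖ ^ 2 ≤
        -⟪b, y'⟫ + ⟪(LinearMap.adjoint A) y' + z k - Q (w (k + 1)) - c, x k⟫ +
          σ / 2 * ‖(LinearMap.adjoint A) y' + z k - Q (w (k + 1)) - c‖ ^ 2)
    (hz : ∀ k, ∀ z' : E,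
      θ (-(z (k + 1))) + ((⟪z (k + 1), x k⟫ + σ / 2 * ‖ρ • (LinearMap.adjoint A) (y (k + 1)) -
          (1 - ρ) • z k + z (k + 1) - ρ • Q (w (k + 1)) - ρ • c‖ ^ 2 : ℝ) : EReal) ≤
        θ (-z') + ((⟪z', x k⟫ + σ / 2 * ‖ρ • (LinearMap.adjoint A) (y (k + 1)) -
          (1 - ρ) • z k + z' - ρ • Q (w (k + 1)) - ρ • c‖ ^ 2 : ℝ) : EReal))
    (hx : ∀ k, x (k + 1) = x k + σ • (ρ • (LinearMap.adjoint A) (y (k + 1)) -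
      (1 - ρ) • z k + z (k + 1) - ρ • Q (w (k + 1)) - ρ • c))
    -- the sequence uᵏ
    (u : ℕ → E) (hu : ∀ k, u k = x (k + 1) - σ • z (k + 1)) :
    ∀ k, u (k + 1) = (1 - ρ) • u k +
      ρ • (u k - P (u k) + PiK ((2 : ℝ) • P (u k) - u k - σ • (Q (P (u k)) + c))) := by
  intro k
  simp only [hw] at hy hz hx
  have hadj : ∀ (yy : F) (xx : E), ⟪(LinearMap.adjoint A) yy, xx⟫ = ⟪yy, A xx⟫ :=
    fun yy xx => LinearMap.adjoint_inner_left A xx yy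
  -- Step A : P (u k) = x (k + 1)
  have hreassoc : ∀ z' : E, ρ • (LinearMap.adjoint A) (y (k + 1)) - (1 - ρ) • z k + z' -
      ρ • Q (x k) - ρ • c =
      (ρ • (LinearMap.adjoint A) (y (k + 1)) - (1 - ρ) • z k - ρ • Q (x k) - ρ • c) + z' :=
    fun z' => by abel
  have hmin : ∀ z' : E,
      θ (-(z (k + 1))) + ((⟪z (k + 1), x k⟫ + σ / 2 *
        ‖(ρ • (LinearMap.adjoint A) (y (k + 1)) - (1 - ρ) • z k - ρ • Q (x k) - ρ • c) +
          z (k + 1)‖ ^ 2 : ℝ) : EReal) ≤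
      θ (-z') + ((⟪z', x k⟫ + σ / 2 *
        ‖(ρ • (LinearMap.adjoint A) (y (k + 1)) - (1 - ρ) • z k - ρ • Q (x k) - ρ • c) +
          z'‖ ^ 2 : ℝ) : EReal) := by
    intro z'
    have h := hz k z'
    rw [hreassoc (z (k + 1)), hreassoc z'] at h
    exact h
  have hx1 : x (k + 1) = x k + σ • ((ρ • (LinearMap.adjoint A) (y (k + 1)) - (1 - ρ) • z k -
      ρ • Q (x k) - ρ • c) + z (k + 1)) := by
    rw [hx k, hreassoc (z (k + 1))]
  have hPx : P (u k) = x (k + 1) := by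
    rw [hu k]
    exact prox_step θ hproper_bot hconv σ hσ P hP (x k) (x (k + 1)) (z (k + 1)) _ (z 0) hz0
      hmin hx1
  -- Step B : optimality of the y-update at step k+1
  set g := (LinearMap.adjoint A) (y (k + 1 + 1)) + z (k + 1) - Q (x (k + 1)) - c with hg
  have hAvb : A (x (k + 1)) + σ • A g = b := by
    set D := A (x (k + 1)) + σ • A g - b with hD
    have hDinner : -⟪b, D⟫ + ⟪(LinearMap.adjoint A) D, x (k + 1)⟫ + σ * ⟪g, (LinearMap.adjoint A) D⟫
        = ‖D‖ ^ 2 := by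
      have h1 : ⟪D, A (x (k + 1)) + σ • A g - b⟫ = ‖D‖ ^ 2 := by
        rw [← hD, real_inner_self_eq_norm_sq]
      rw [inner_sub_right, inner_add_right, real_inner_smul_right] at h1
      have c1 : ⟪b, D⟫ = ⟪D, b⟫ := real_inner_comm _ _
      have c2 : ⟪(LinearMap.adjoint A) D, x (k + 1)⟫ = ⟪D, A (x (k + 1))⟫ := hadj _ _
      have c3 : σ * ⟪g, (LinearMap.adjoint A) D⟫ = σ * ⟪D, A g⟫ := by
        rw [real_inner_comm ((LinearMap.adjoint A) D) g]
        · rw [hadj D g]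
      linarith
    have hq : ∀ t : ℝ, 0 ≤ t * ‖D‖ ^ 2 + t ^ 2 * (σ / 2 * ‖(LinearMap.adjoint A) D‖ ^ 2) := by
      intro t
      have h := hy (k + 1) (y (k + 1 + 1) + t • D)
      have hexp : (LinearMap.adjoint A) (y (k + 1 + 1) + t • D) + z (k + 1) - Q (x (k + 1)) - c
          = g + t • (LinearMap.adjoint A) D := by
        rw [map_add, map_smul, hg]; abel
      rw [hexp, ← hg] at h
      rw [inner_add_right b, real_inner_smul_right b, inner_add_left, real_inner_smul_left,
        expand_sq] at h
      have hident : t * ‖D‖ ^ 2 + t ^ 2 * (σ / 2 * ‖(LinearMap.adjoint A) D‖ ^ 2) =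
          (-(⟪b, y (k + 1 + 1)⟫ + t * ⟪b, D⟫) + (⟪g, x (k + 1)⟫ +
            t * ⟪(LinearMap.adjoint A) D, x (k + 1)⟫) +
            σ / 2 * (‖g‖ ^ 2 + 2 * (t * ⟪g, (LinearMap.adjoint A) D⟫) +
              t ^ 2 * ‖(LinearMap.adjoint A) D‖ ^ 2)) -
          (-⟪b, y (k + 1 + 1)⟫ + ⟪g, x (k + 1)⟫ + σ / 2 * ‖g‖ ^ 2) := by
        rw [← hDinner]; ring
      rw [hident]
      linarith
    have hD0 : ‖D‖ ^ 2 ≤ 0 := by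
      apply aux_nonpos (C := σ / 2 * ‖(LinearMap.adjoint A) D‖ ^ 2)
      intro t ht0 ht1
      have h := hq (-t)
      have h2 : t * ‖D‖ ^ 2 ≤ t * (t * (σ / 2 * ‖(LinearMap.adjoint A) D‖ ^ 2)) := by
        nlinarith [h]
      exact le_of_mul_le_mul_left h2 ht0
    have hDzero : D = 0 := by
      have h1 : ‖D‖ ^ 2 = 0 := le_antisymm hD0 (by positivity)
      have h2 : ‖D‖ = 0 := by
        have := pow_eq_zero_iff (n := 2) (by norm_num) |>.mp h1
        exact this
      exact norm_eq_zero.mp h2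
    rw [hD] at hDzero
    exact sub_eq_zero.mp hDzero
  -- Step C : the projection identity
  set s := x (k + 1) + σ • z (k + 1) - σ • Q (x (k + 1)) - σ • c with hs
  set v := x (k + 1) + σ • g with hv
  have hAv : A v = b := by
    rw [hv, map_add, map_smul]
    exact hAvb
  have hsv : s - v = -(σ • (LinearMap.adjoint A) (y (k + 1 + 1))) := by
    rw [hs, hv, hg]; module
  have hq1 := (hPiK s).1
  have hq2 := (hPiK s).2 v hAv
  have hcross : ⟪s - v, v - PiK s⟫ = 0 := by
    have hA0 : A (v - PiK s) = 0 := by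
      rw [map_sub, hAv, hq1, sub_self]
    rw [hsv, inner_neg_left, real_inner_smul_left, hadj, hA0, inner_zero_right]
    ring
  have hpyth : ‖s - PiK s‖ ^ 2 = ‖s - v‖ ^ 2 + ‖v - PiK s‖ ^ 2 := by
    have hsplit : s - PiK s = (s - v) + (v - PiK s) := by abel
    rw [hsplit, norm_add_sq_real, hcross]
    ring
  have hle : ‖s - PiK s‖ ^ 2 ≤ ‖s - v‖ ^ 2 :=
    pow_le_pow_left₀ (norm_nonneg _) hq2 2
  have hPis : PiK s = v := by
    have h1 : ‖v - PiK s‖ ^ 2 ≤ 0 := by linarith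
    have h2 : ‖v - PiK s‖ = 0 := by
      have := pow_eq_zero_iff (n := 2) (by norm_num) |>.mp (le_antisymm h1 (by positivity))
      exact this
    have h3 : v - PiK s = 0 := norm_eq_zero.mp h2
    have := sub_eq_zero.mp h3
    exact this.symm
  -- Step D : conclusion
  rw [hu (k + 1), hPx, hu k]
  have hargs : (2 : ℝ) • x (k + 1) - (x (k + 1) - σ • z (k + 1)) -
      σ • (Q (x (k + 1)) + c) = s := by
    rw [hs]; module
  rw [hargs, hPis, hx (k + 1), hv, hg]
  module
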